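/- Let L > 0, f ∈ H¹(T_L), and let α ∈ (2π/L)ℤ with α > 0. If 𝓔(e^{iαx}f) ≥ 0, then (1/4)||f||⁴_{L⁴(T_L)} ≤ −P(f) + (α/2)M(f) + 𝓔(f)/(2α). -/

import Mathlib

open MeasureTheory Real Complex Filter
open scoped Topology

noncomputable section

/-- The squared `L²` norm over one period `[0,L)`; for `f` itself this is the mass `M(f)`. -/
def Mq (L : ℝ) (f : ℝ → ℂ) : ℝ := ∫ x in Set.Ioc (0:ℝ) L, ‖f x‖ ^ 2

/-- The `L⁴(T_L)` norm. -/
def L4 (L : ℝ) (f : ℝ → ℂ) : ℝ := (∫ x in Set.Ioc (0:ℝ) L, ‖f x‖ ^ 4) ^ ((1:ℝ)/4)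

/-- The `L⁶(T_L)` norm. -/
def L6 (L : ℝ) (f : ℝ → ℂ) : ℝ := (∫ x in Set.Ioc (0:ℝ) L, ‖f x‖ ^ 6) ^ ((1:ℝ)/6)

/-- `f` is an `H¹` function on the circle `T_L = ℝ/(Lℤ)` with weak derivative `fd`:
both are periodic with period `L`, `fd` is square-integrable on a period, and `f`
is the antiderivative of `fd`. -/
structure H1p (L : ℝ) (f fd : ℝ → ℂ) : Prop where
  per_f : Function.Periodic f L
  per_fd : Function.Periodic fd L
  memL2 : MemLp fd 2 (volume.restrict (Set.Ioc 0 L))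
  eq_int : ∀ x : ℝ, f x = f 0 + ∫ t in (0:ℝ)..x, fd t

/-- The `H¹(T_L)` norm of `f` (with weak derivative `fd`). -/
def H1norm (L : ℝ) (f fd : ℝ → ℂ) : ℝ := Real.sqrt (Mq L f + Mq L fd)

/-- The conserved quantity `𝓔(f) = ∫|f'|² − (1/16)∫|f|⁶ + (3/8)μ(f)∫|f|⁴`. -/
def calE (L : ℝ) (f fd : ℝ → ℂ) : ℝ :=
  Mq L fd - (1/16) * (∫ x in Set.Ioc (0:ℝ) L, ‖f x‖ ^ 6)
    + (3/8) * (Mq L f / L) * ∫ x in Set.Ioc (0:ℝ) L, ‖f x‖ ^ 4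

/-- The momentum `P(f) = Im ∫ f conj(f') − (1/4)∫|f|⁴`. -/
def momP (L : ℝ) (f fd : ℝ → ℂ) : ℝ :=
  (∫ x in Set.Ioc (0:ℝ) L, f x * (starRingEnd ℂ) (fd x)).im
    - (1/4) * ∫ x in Set.Ioc (0:ℝ) L, ‖f x‖ ^ 4

/-- The optimal Gagliardo–Nirenberg constant `C_GN = 3^{1/6} (2π)^{−1/9}`. -/
def CGN : ℝ := (3:ℝ) ^ ((1:ℝ)/6) * (2 * Real.pi) ^ (-((1:ℝ)/9))

/-! The modulated derivative is `e^{iαx}(f' + iαf)`, and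
`|f' + iαf|² = |f'|² + α²|f|² - 2α Im(f f̄')`, while every other term of `𝓔` only sees `|f|`.
Hence `𝓔(e^{iαx}f) = 𝓔(f) + α² M(f) - 2α Im ∫ f f̄'`, and dividing `0 ≤ 𝓔(e^{iαx}f)` by `2α`
bounds `Im ∫ f f̄' = P(f) + ¼‖f‖₄⁴` by `(α/2) M(f) + 𝓔(f)/(2α)`. -/

open ComplexConjugate

namespace H1p

variable {L : ℝ} {f fd : ℝ → ℂ}

theorem continuousOn_Icc (hf : H1p L f fd) (hL : 0 < L) : ContinuousOn f (Set.Icc 0 L) := by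
  have hfd : IntegrableOn fd (Set.uIcc 0 L) := by
    rw [Set.uIcc_of_le hL.le, integrableOn_Icc_iff_integrableOn_Ioc]
    exact hf.memL2.integrable one_le_two
  have hprimitive := intervalIntegral.continuousOn_primitive_interval hfd
  rw [Set.uIcc_of_le hL.le] at hprimitive
  exact (continuousOn_const.add hprimitive).congr fun x _ => hf.eq_int x

theorem memLp_two (hf : H1p L f fd) (hL : 0 < L) :
    MemLp f 2 (volume.restrict (Set.Ioc 0 L)) := by
  have hcont := hf.continuousOn_Icc hL
  obtain ⟨C, hC⟩ := isCompact_Icc.exists_bound_of_continuousOn hcont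
  have hmeas : AEStronglyMeasurable f (volume.restrict (Set.Ioc 0 L)) :=
    (hcont.mono Set.Ioc_subset_Icc_self).aestronglyMeasurable measurableSet_Ioc
  refine MemLp.of_bound hmeas C ((ae_restrict_iff' measurableSet_Ioc).2 (ae_of_all _ ?_))
  exact fun x hx => hC x (Set.Ioc_subset_Icc_self hx)

end H1p

theorem norm_exp_I_mul_ofReal_mul (α x : ℝ) (z : ℂ) : ‖exp (I * α * x) * z‖ = ‖z‖ := by
  simp [norm_exp]

theorem norm_add_I_mul_sq (α : ℝ) (a b : ℂ) :
    ‖a + I * α * b‖ ^ 2 = ‖a‖ ^ 2 + α ^ 2 * ‖b‖ ^ 2 - 2 * α * (b * conj a).im := by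
  rw [Complex.sq_norm, Complex.sq_norm, Complex.sq_norm]
  simp only [normSq_apply, add_re, add_im, mul_re, mul_im, I_re, I_im, ofReal_re, ofReal_im,
    conj_re, conj_im]
  ring

theorem integral_norm_add_I_mul_sq {X : Type*} [MeasurableSpace X] {μ : Measure X}
    {f g : X → ℂ} (hf : MemLp f 2 μ) (hg : MemLp g 2 μ) (α : ℝ) :
    ∫ x, ‖g x + I * α * f x‖ ^ 2 ∂μ
      = ∫ x, ‖g x‖ ^ 2 ∂μ + α ^ 2 * ∫ x, ‖f x‖ ^ 2 ∂μ
        - 2 * α * (∫ x, f x * conj (g x) ∂μ).im := by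
  have hf_sq : Integrable (fun x => ‖f x‖ ^ 2) μ := hf.norm.integrable_sq
  have hg_sq : Integrable (fun x => ‖g x‖ ^ 2) μ := hg.norm.integrable_sq
  have hfg : Integrable (fun x => f x * conj (g x)) μ := hf.integrable_mul hg.star
  have hfg_im : Integrable (fun x => (f x * conj (g x)).im) μ := hfg.im
  simp_rw [norm_add_I_mul_sq]
  have hsum : Integrable (fun x => ‖g x‖ ^ 2 + α ^ 2 * ‖f x‖ ^ 2) μ :=
    hg_sq.add (hf_sq.const_mul _)
  rw [integral_sub hsum (hfg_im.const_mul _),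
    integral_add hg_sq (hf_sq.const_mul _), integral_const_mul, integral_const_mul]
  exact congrArg (_ - 2 * α * ·) (integral_im hfg)

theorem integral_norm_exp_I_mul_pow (α : ℝ) (f : ℝ → ℂ) (n : ℕ) (ν : Measure ℝ) :
    ∫ x, ‖exp (I * α * x) * f x‖ ^ n ∂ν = ∫ x, ‖f x‖ ^ n ∂ν := by
  simp_rw [norm_exp_I_mul_ofReal_mul]

theorem calE_modulate {L : ℝ} {f fd : ℝ → ℂ} (hf : MemLp f 2 (volume.restrict (Set.Ioc 0 L)))
    (hfd : MemLp fd 2 (volume.restrict (Set.Ioc 0 L))) (α : ℝ) :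
    calE L (fun x => exp (I * α * x) * f x) (fun x => exp (I * α * x) * (fd x + I * α * f x))
      = calE L f fd + α ^ 2 * Mq L f
        - 2 * α * (∫ x in Set.Ioc (0:ℝ) L, f x * conj (fd x)).im := by
  simp only [calE, Mq, integral_norm_exp_I_mul_pow, integral_norm_add_I_mul_sq hf hfd]
  ring

theorem L4_pow_four (L : ℝ) (f : ℝ → ℂ) : L4 L f ^ 4 = ∫ x in Set.Ioc (0:ℝ) L, ‖f x‖ ^ 4 := by
  rw [L4, ← Real.rpow_natCast, ← Real.rpow_mul (integral_nonneg fun x => by positivity)]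
  norm_num

theorem statement17_general (L : ℝ) (hL : 0 < L) (f fd : ℝ → ℂ) (hf : H1p L f fd)
    (α : ℝ) (hαpos : 0 < α)
    (hE : 0 ≤ calE L (fun x => Complex.exp (Complex.I * α * x) * f x)
      (fun x => Complex.exp (Complex.I * α * x) * (fd x + Complex.I * α * f x))) :
    (1/4) * (L4 L f) ^ 4 ≤ -momP L f fd + (α / 2) * Mq L f + calE L f fd / (2 * α) := by
  rw [calE_modulate (hf.memLp_two hL) hf.memL2] at hE
  have hmomentum : (∫ x in Set.Ioc (0:ℝ) L, f x * conj (fd x)).im - α / 2 * Mq L f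
      ≤ calE L f fd / (2 * α) := by
    rw [le_div_iff₀ (by positivity)]
    linarith
  rw [L4_pow_four, momP]
  linarith

/-- For `f ∈ H¹(T_L)` and `α ∈ (2π/L)ℤ`, `α > 0`: if the modulation
`φ(x) = e^{iαx}f(x)` satisfies `𝓔(φ) ≥ 0`, then
`(1/4)‖f‖₄⁴ ≤ −P(f) + (α/2)M(f) + 𝓔(f)/(2α)`. -/
theorem statement17 (L : ℝ) (hL : 0 < L) (f fd : ℝ → ℂ) (hf : H1p L f fd)
    (k : ℤ) (α : ℝ) (hα : α = 2 * Real.pi * k / L) (hαpos : 0 < α)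
    (hE : 0 ≤ calE L (fun x => Complex.exp (Complex.I * α * x) * f x)
      (fun x => Complex.exp (Complex.I * α * x) * (fd x + Complex.I * α * f x))) :
    (1/4) * (L4 L f) ^ 4 ≤ -momP L f fd + (α / 2) * Mq L f + calE L f fd / (2 * α) :=
  statement17_general L hL f fd hf α hαpos hE

end
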